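/- Let b be a Wiener-class sequence and let A be a bounded semi-infinite real matrix with the decay property. Then the product T(b)A, with entries (T(b)A)_{ij} = ∑_{k≥1} b_{k−i} A_{kj}, has the decay property. -/
import Mathlib


open Filter Topology

/-- Every row of `A` is absolutely summable. -/
def RowsSummable (A : ℕ → ℕ → ℝ) : Prop := ∀ i, Summable fun j => |A i j|

/-- The infinity norm of a semi-infinite matrix: the supremum of the row sums. -/
noncomputable def normInf (A : ℕ → ℕ → ℝ) : ℝ := ⨆ i, ∑' j, |A i j|

/-- `A` is bounded: all row sums are finite and their supremum is finite. -/
def MatBounded (A : ℕ → ℕ → ℝ) : Prop :=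
  RowsSummable A ∧ BddAbove (Set.range fun i => ∑' j, |A i j|)

/-- `A` has the decay property: all row sums are finite and tend to zero. -/
def HasDecay (A : ℕ → ℕ → ℝ) : Prop :=
  RowsSummable A ∧ Tendsto (fun i => ∑' j, |A i j|) atTop (𝓝 0)

/-- The semi-infinite Toeplitz matrix associated with a two-sided sequence:
`T(a)_{ij} = a_{j−i}`. -/
noncomputable def Toep (a : ℤ → ℝ) : ℕ → ℕ → ℝ := fun i j => a ((j : ℤ) - (i : ℤ))

/-- Convolution of two-sided sequences. -/
noncomputable def zconv (a b : ℤ → ℝ) : ℤ → ℝ := fun n => ∑' k : ℤ, a k * b (n - k)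

/- STATEMENT 4: if b is in the Wiener class and A is a bounded matrix with the
decay property, then T(b)A, with entries ∑_k b_{k−i} A_{kj}, has the decay
property. -/

set_option maxHeartbeats 1000000 in
theorem stmt4 (b : ℤ → ℝ) (hb : Summable fun n => |b n|)
    (A : ℕ → ℕ → ℝ) (hA : MatBounded A) (hAd : HasDecay A) :
    HasDecay (fun i j => ∑' k, Toep b i k * A k j) := by
  obtain ⟨hAs, hAb⟩ := hA
  obtain ⟨-, hAd0⟩ := hAd
  obtain ⟨M, hM⟩ := hAb
  have hM' : ∀ k, (∑' j, |A k j|) ≤ M := fun k => hM ⟨k, rfl⟩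
  have hwA0 : ∀ k : ℕ, (0:ℝ) ≤ ∑' j, |A k j| := fun k => tsum_nonneg fun _ => abs_nonneg _
  have hM0 : 0 ≤ M := le_trans (hwA0 0) (hM' 0)
  have hinj : ∀ i : ℕ, Function.Injective (fun k : ℕ => (k : ℤ) - (i : ℤ)) := by
    intro i k l h
    simp only [sub_left_inj, Nat.cast_inj] at h
    exact h
  have hc : ∀ i : ℕ, Summable fun k : ℕ => |b ((k:ℤ) - (i:ℤ))| :=
    fun i => hb.comp_injective (hinj i)
  have hcM : ∀ i : ℕ, Summable fun k : ℕ => |b ((k:ℤ) - (i:ℤ))| * M :=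
    fun i => (hc i).mul_right M
  have hcw : ∀ i : ℕ, Summable fun k : ℕ => |b ((k:ℤ) - (i:ℤ))| * ∑' j, |A k j| := by
    intro i
    exact Summable.of_nonneg_of_le (fun k => mul_nonneg (abs_nonneg _) (hwA0 k))
      (fun k => mul_le_mul_of_nonneg_left (hM' k) (abs_nonneg _)) (hcM i)
  have hf : ∀ i : ℕ, Summable fun p : ℕ × ℕ => |b ((p.1:ℤ) - (i:ℤ))| * |A p.1 p.2| := by
    intro i
    rw [summable_prod_of_nonneg (fun p => mul_nonneg (abs_nonneg _) (abs_nonneg _))]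
    refine ⟨fun k => (hAs k).mul_left |b ((k:ℤ) - (i:ℤ))|, ?_⟩
    refine (hcw i).congr fun k => ?_
    show |b ((k:ℤ) - (i:ℤ))| * (∑' j, |A k j|) = ∑' j : ℕ, |b ((k:ℤ) - (i:ℤ))| * |A k j|
    rw [tsum_mul_left]
  have hterm : ∀ i j : ℕ, Summable fun k : ℕ => |Toep b i k * A k j| := by
    intro i j
    refine Summable.of_nonneg_of_le (fun k => abs_nonneg _) (fun k => ?_) (hcM i)
    rw [abs_mul]
    exact mul_le_mul_of_nonneg_left
      (le_trans (Summable.le_tsum (hAs k) j fun _ _ => abs_nonneg _) (hM' k)) (abs_nonneg _)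
  have hCle : ∀ i j : ℕ, |∑' k, Toep b i k * A k j| ≤ ∑' k : ℕ, |b ((k:ℤ) - (i:ℤ))| * |A k j| := by
    intro i j
    calc |∑' k, Toep b i k * A k j| ≤ ∑' k, |Toep b i k * A k j| := by
          have hsum : Summable fun k : ℕ => ‖Toep b i k * A k j‖ := by
            simp only [Real.norm_eq_abs]
            exact hterm i j
          have h := norm_tsum_le_tsum_norm (f := fun k => Toep b i k * A k j) hsum
          simpa only [Real.norm_eq_abs] using h
      _ = ∑' k : ℕ, |b ((k:ℤ) - (i:ℤ))| * |A k j| := by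
          refine tsum_congr fun k => ?_
          rw [abs_mul]
          rfl
  have hDcol : ∀ i : ℕ, Summable fun j : ℕ => ∑' k : ℕ, |b ((k:ℤ) - (i:ℤ))| * |A k j| :=
    fun i => (hf i).prod_symm.prod
  have hrows : RowsSummable fun i j => ∑' k, Toep b i k * A k j := fun i =>
    Summable.of_nonneg_of_le (fun j => abs_nonneg _) (fun j => hCle i j) (hDcol i)
  refine ⟨hrows, ?_⟩
  have hrowle : ∀ i, (∑' j, |∑' k, Toep b i k * A k j|)
      ≤ ∑' k : ℕ, |b ((k:ℤ) - (i:ℤ))| * ∑' j, |A k j| := by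
    intro i
    calc (∑' j, |∑' k, Toep b i k * A k j|)
        ≤ ∑' j, ∑' k : ℕ, |b ((k:ℤ) - (i:ℤ))| * |A k j| :=
          Summable.tsum_le_tsum (hCle i) (hrows i) (hDcol i)
      _ = ∑' (k : ℕ) (j : ℕ), |b ((k:ℤ) - (i:ℤ))| * |A k j| :=
          Summable.tsum_comm (f := fun (k j : ℕ) => |b ((k:ℤ) - (i:ℤ))| * |A k j|) (hf i)
      _ = ∑' k : ℕ, |b ((k:ℤ) - (i:ℤ))| * ∑' j, |A k j| := tsum_congr fun k => tsum_mul_left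
  obtain ⟨β, hβdef⟩ : ∃ x : ℝ, x = ∑' n : ℤ, |b n| := ⟨_, rfl⟩
  have hβ0 : 0 ≤ β := hβdef ▸ tsum_nonneg fun _ => abs_nonneg _
  have hg0 : Tendsto (fun i : ℕ => ∑' k : ℕ, |b ((k:ℤ) - (i:ℤ))| * ∑' j, |A k j|)
      atTop (𝓝 0) := by
    rw [NormedAddCommGroup.tendsto_nhds_zero]
    intro ε hε
    obtain ⟨ε', hε'def⟩ : ∃ x : ℝ, x = ε / (2 * (β + 1)) := ⟨_, rfl⟩
    have hε' : 0 < ε' := by rw [hε'def]; positivity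
    obtain ⟨N, hN⟩ := Filter.eventually_atTop.mp (hAd0.eventually (gt_mem_nhds hε'))
    have hfin : Tendsto (fun i : ℕ => ∑ k ∈ Finset.range N, M * |b ((k:ℤ) - (i:ℤ))|)
        atTop (𝓝 0) := by
      have h0 : Tendsto (fun i : ℕ => ∑ k ∈ Finset.range N, M * |b ((k:ℤ) - (i:ℤ))|) atTop
          (𝓝 (∑ k ∈ Finset.range N, (0:ℝ))) := by
        refine tendsto_finset_sum _ fun k _ => ?_
        have h2 : Tendsto (fun i : ℕ => -(i:ℤ)) atTop atBot :=
          tendsto_neg_atTop_atBot.comp tendsto_natCast_atTop_atTop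
        have h3 := tendsto_atBot_add_const_left atTop ((k:ℕ):ℤ) h2
        have h1 : Tendsto (fun i : ℕ => (k:ℤ) - (i:ℤ)) atTop atBot :=
          h3.congr fun i => by ring
        have h4 : Tendsto (fun i : ℕ => (k:ℤ) - (i:ℤ)) atTop (cofinite : Filter ℤ) := by
          rw [Int.cofinite_eq]
          exact h1.mono_right le_sup_left
        have h5 : Tendsto (fun i : ℕ => |b ((k:ℤ) - (i:ℤ))|) atTop (𝓝 0) :=
          hb.tendsto_cofinite_zero.comp h4
        have := h5.const_mul M
        simpa using this
      simpa using h0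
    have hE1 : ∀ᶠ i : ℕ in atTop,
        ∑ k ∈ Finset.range N, M * |b ((k:ℤ) - (i:ℤ))| < ε / 2 :=
      hfin.eventually (gt_mem_nhds (by positivity))
    filter_upwards [hE1] with i hi
    have hg_nonneg : (0:ℝ) ≤ ∑' k : ℕ, |b ((k:ℤ) - (i:ℤ))| * ∑' j, |A k j| :=
      tsum_nonneg fun k => mul_nonneg (abs_nonneg _) (hwA0 k)
    rw [Real.norm_of_nonneg hg_nonneg]
    have hsplit : (∑ k ∈ Finset.range N, |b ((k:ℤ) - (i:ℤ))| * ∑' j, |A k j|)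
        + (∑' k : ℕ, |b (((k + N : ℕ):ℤ) - (i:ℤ))| * ∑' j, |A (k + N) j|)
        = ∑' k : ℕ, |b ((k:ℤ) - (i:ℤ))| * ∑' j, |A k j| :=
      Summable.sum_add_tsum_nat_add N (hcw i)
    have htail_summ : Summable fun k : ℕ => |b (((k + N : ℕ):ℤ) - (i:ℤ))| * ∑' j, |A (k + N) j| :=
      (hcw i).comp_injective fun a b h => by omega
    have htail_b : Summable fun k : ℕ => |b (((k + N : ℕ):ℤ) - (i:ℤ))| :=
      (hc i).comp_injective fun a b h => by omega
    have htail_le : (∑' k : ℕ, |b (((k + N : ℕ):ℤ) - (i:ℤ))| * ∑' j, |A (k + N) j|)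
        ≤ ∑' k : ℕ, |b (((k + N : ℕ):ℤ) - (i:ℤ))| * ε' := by
      refine Summable.tsum_le_tsum (fun k => ?_) htail_summ (htail_b.mul_right ε')
      exact mul_le_mul_of_nonneg_left (le_of_lt (hN (k + N) (by omega))) (abs_nonneg _)
    have htail_b_le : (∑' k : ℕ, |b (((k + N : ℕ):ℤ) - (i:ℤ))|) ≤ β := by
      rw [hβdef]
      refine Summable.tsum_le_tsum_of_inj (fun k : ℕ => ((k + N : ℕ):ℤ) - (i:ℤ))
        (fun a b h => by simp only [sub_left_inj, Nat.cast_inj] at h; omega)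
        (fun c _ => abs_nonneg _) (fun k => le_refl _) htail_b hb
    have htail_bound : (∑' k : ℕ, |b (((k + N : ℕ):ℤ) - (i:ℤ))| * ∑' j, |A (k + N) j|)
        ≤ ε / 2 := by
      have h6 : (∑' k : ℕ, |b (((k + N : ℕ):ℤ) - (i:ℤ))| * ε')
          = (∑' k : ℕ, |b (((k + N : ℕ):ℤ) - (i:ℤ))|) * ε' := tsum_mul_right
      have h7 : (∑' k : ℕ, |b (((k + N : ℕ):ℤ) - (i:ℤ))|) * ε' ≤ β * ε' :=
        mul_le_mul_of_nonneg_right htail_b_le (le_of_lt hε')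
      have h8 : β * ε' ≤ ε / 2 := by
        have hβ1 : (0:ℝ) < β + 1 := by linarith
        have : β * ε' ≤ (β + 1) * ε' := by nlinarith
        have heq : (β + 1) * ε' = ε / 2 := by
          rw [hε'def]
          field_simp
        linarith
      linarith [htail_le]
    have hfin_bound : (∑ k ∈ Finset.range N, |b ((k:ℤ) - (i:ℤ))| * ∑' j, |A k j|) < ε / 2 := by
      refine lt_of_le_of_lt ?_ hi
      refine Finset.sum_le_sum fun k _ => ?_
      rw [mul_comm M]
      exact mul_le_mul_of_nonneg_left (hM' k) (abs_nonneg _)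
    linarith [hsplit]
  exact squeeze_zero (fun i => tsum_nonneg fun _ => abs_nonneg _) hrowle hg0
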